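/- arXiv:2204.09910 — 4 statements merged into one kernel-verified Lean document; each statement's English description precedes it below -/
import Mathlib

section
/- For every nonnegative integer n, the Motzkin polynomial satisfies the closed form M_n(t) = \sum_{j=0}^{\lfloor n/2 \rfloor} \binom{n}{2j} C_j t^{n-2j}, where C_j = \binom{2j}{j}/(j+1) is the j-th Catalan number. -/
/-!
Store the row `k ↦ M_{n,k}` as a function `ℕ → ℤ[X]`. One step of the recurrence applies
`pathStep + X`, where `pathStep` moves one level up or down. The two summands commute, so the
binomial theorem gives `M_{n,k} = ∑ᵢ C(n,i) B(i,k) X^(n-i)`. Here `B(i,k) = ballot i k` counts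
up/down paths of length `i` from level `0` to level `k` that never go below `0`. Then `B(i,0)` vanishes
for odd `i`, and the reflection principle `B(2j,0) = C(2j,j) - C(2j,j+1)` identifies `B(2j,0)` with
the Catalan number.
-/

open Polynomial

/-- The weight polynomials `M_{n,k}(t)` of Motzkin paths from `(0,0)` to `(n,k)`:
`M_{n,k} = M_{n-1,k-1} + t·M_{n-1,k} + M_{n-1,k+1}`, `M_{n,k} = 0` for `k < 0`,
`M_{0,k} = [k = 0]`. -/
noncomputable def motzkinPoly : ℕ → ℤ → Polynomial ℤ
  | 0, k => if k = 0 then 1 else 0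
  | n + 1, k =>
      if k < 0 then 0 else
        motzkinPoly n (k - 1) + X * motzkinPoly n k + motzkinPoly n (k + 1)
  termination_by n _ => n

open Finset

def pathStep (R : Type*) [Semiring R] : Module.End R (ℕ → R) where
  toFun f
    | 0 => f 1
    | k + 1 => f k + f (k + 2)
  map_add' f g := by funext k; cases k <;> simp [add_add_add_comm]
  map_smul' r f := by funext k; cases k <;> simp [mul_add]

@[simp] lemma pathStep_apply_zero {R : Type*} [Semiring R] (f : ℕ → R) :
    pathStep R f 0 = f 1 := rfl

@[simp] lemma pathStep_apply_succ {R : Type*} [Semiring R] (f : ℕ → R) (k : ℕ) :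
    pathStep R f (k + 1) = f k + f (k + 2) := rfl

lemma pathStep_add_algebraMap_pow_apply {R : Type*} [CommSemiring R] (t : R) (n : ℕ)
    (f : ℕ → R) :
    ((pathStep R + algebraMap R _ t) ^ n) f =
      ∑ i ∈ range (n + 1), (n.choose i * t ^ (n - i)) • (pathStep R ^ i) f := by
  rw [(Algebra.commute_algebraMap_right t (pathStep R)).add_pow, LinearMap.sum_apply]
  refine sum_congr rfl fun i _ ↦ ?_
  rw [← map_pow, Module.End.mul_apply, Module.End.natCast_apply, Module.End.mul_apply,
    Module.algebraMap_end_apply, map_smul, map_nsmul, mul_smul, Nat.cast_smul_eq_nsmul,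
    smul_comm]

def ballot : ℕ → ℕ → ℤ
  | 0, k => if k = 0 then 1 else 0
  | ℓ + 1, 0 => ballot ℓ 1
  | ℓ + 1, k + 1 => ballot ℓ k + ballot ℓ (k + 2)

lemma pathStep_pow_single {R : Type*} [Ring R] (ℓ : ℕ) :
    (pathStep R ^ ℓ) (Pi.single 0 1) = fun k ↦ (ballot ℓ k : R) := by
  induction ℓ with
  | zero => funext k; cases k <;> simp [ballot]
  | succ ℓ ih =>
    funext k
    rw [pow_succ', Module.End.mul_apply, ih]
    cases k <;> simp [ballot]

lemma ballot_of_odd {ℓ k : ℕ} (h : Odd (ℓ + k)) : ballot ℓ k = 0 := by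
  rw [Nat.odd_iff] at h
  induction ℓ generalizing k with
  | zero => simp [ballot]; omega
  | succ ℓ ih =>
    cases k with
    | zero => exact ih (by omega)
    | succ k => rw [ballot, ih (by omega), ih (by omega), add_zero]

lemma ballot_eq_choose_sub_choose {ℓ k u : ℕ} (h : ℓ + k = 2 * u) :
    ballot ℓ k = ℓ.choose u - ℓ.choose (u + 1) := by
  induction ℓ generalizing k u with
  | zero => cases u <;> simp [ballot] <;> omega
  | succ ℓ ih =>
    obtain _ | v := u
    · omega
    rw [Nat.choose_succ_succ' ℓ v, Nat.choose_succ_succ' ℓ (v + 1)]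
    cases k with
    | zero =>
      obtain ⟨w, rfl⟩ : ∃ w, ℓ = 2 * w + 1 := ⟨v, by omega⟩
      obtain rfl : v = w := by omega
      rw [ballot, ih (by omega : 2 * v + 1 + 1 = 2 * (v + 1)), ← Nat.choose_symm_half]
      push_cast
      ring
    | succ k =>
      rw [ballot, ih (by omega : ℓ + k = 2 * v), ih (by omega : ℓ + (k + 2) = 2 * (v + 1))]
      push_cast
      ring

lemma catalan_eq_choose_sub_choose (j : ℕ) :
    (catalan j : ℤ) = (2 * j).choose j - (2 * j).choose (j + 1) := by
  have hcentral : ((j + 1) * catalan j : ℤ) = (2 * j).choose j := by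
    exact_mod_cast succ_mul_catalan_eq_centralBinom j
  have hshift : ((2 * j).choose (j + 1) * (j + 1) : ℤ) = (2 * j).choose j * j := by
    have h := Nat.choose_succ_right_eq (2 * j) j
    rw [two_mul, Nat.add_sub_cancel, ← two_mul] at h
    exact_mod_cast h
  have hj : ((j : ℤ) + 1) ≠ 0 := by positivity
  apply mul_left_cancel₀ hj
  linear_combination hcentral + hshift

lemma ballot_two_mul_zero (j : ℕ) : ballot (2 * j) 0 = catalan j := by
  rw [ballot_eq_choose_sub_choose (u := j) (by ring), catalan_eq_choose_sub_choose]

lemma sum_range_eq_sum_range_two_mul {M : Type*} [AddCommMonoid M] {f : ℕ → M}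
    (hf : ∀ i, Odd i → f i = 0) (n : ℕ) :
    ∑ i ∈ range (n + 1), f i = ∑ j ∈ range (n / 2 + 1), f (2 * j) := by
  rw [← sum_image fun a _ b _ (h : 2 * a = 2 * b) ↦ by omega]
  refine (sum_subset (fun i ↦ ?_) fun i hi hi' ↦ hf i ?_).symm
  · simp only [mem_image, mem_range]
    omega
  · simp only [mem_image, mem_range, not_exists, not_and] at hi hi'
    rw [Nat.odd_iff]
    have := hi' (i / 2)
    omega

lemma motzkinPoly_of_neg (n : ℕ) {k : ℤ} (hk : k < 0) : motzkinPoly n k = 0 := by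
  cases n <;> simp [motzkinPoly, hk, hk.ne]

lemma motzkinPoly_natCast (n k : ℕ) :
    motzkinPoly n k = ((pathStep ℤ[X] + algebraMap ℤ[X] _ X) ^ n) (Pi.single 0 1) k := by
  induction n generalizing k with
  | zero => cases k <;> simp [motzkinPoly, Nat.cast_add_one_ne_zero]
  | succ n ih =>
    rw [motzkinPoly, if_neg (by omega), pow_succ', Module.End.mul_apply, LinearMap.add_apply,
      Module.algebraMap_end_apply, Pi.add_apply, Pi.smul_apply, smul_eq_mul, ← ih]
    cases k with
    | zero => simp [motzkinPoly_of_neg, ← ih, add_comm]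
    | succ k =>
      rw [pathStep_apply_succ, ← ih, ← ih, show ((k + 1 : ℕ) : ℤ) - 1 = k by omega,
        show ((k + 1 : ℕ) : ℤ) + 1 = (k + 2 : ℕ) by omega]
      ring

/-- `M_n(t) = ∑_{j=0}^{⌊n/2⌋} C(n, 2j) · Catalan(j) · t^{n-2j}`. -/
theorem motzkinPoly_closed_form (n : ℕ) :
    motzkinPoly n 0 =
      ∑ j ∈ Finset.range (n / 2 + 1),
        C ((n.choose (2 * j) : ℤ) * (catalan j : ℤ)) * X ^ (n - 2 * j) := by
  rw [← Nat.cast_zero, motzkinPoly_natCast, pathStep_add_algebraMap_pow_apply, Finset.sum_apply]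
  simp only [Pi.smul_apply, pathStep_pow_single, smul_eq_mul]
  rw [sum_range_eq_sum_range_two_mul fun i hi ↦ by simp [ballot_of_odd (k := 0) hi]]
  refine sum_congr rfl fun j _ ↦ ?_
  rw [ballot_two_mul_zero]
  simp only [eq_intCast, Int.cast_mul, Int.cast_natCast]
  ring
end

section
/- For every positive integer n, the shifted Hankel determinant d_2(n,t) = \det( M_{2+i+j}(t) )_{i,j=0}^{n-1} equals the Wronskian-type determinant F_n(t) F'_{n+1}(t) - F_{n+1}(t) F'_n(t), where F'_n denotes the derivative of the Fibonacci polynomial F_n with respect to t. -/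
open Polynomial

/-- The Fibonacci polynomials: `F_0 = 1`, `F_1 = t`, `F_n = t·F_{n-1} - F_{n-2}`. -/
noncomputable def fibPoly : ℕ → Polynomial ℤ
  | 0 => 1
  | 1 => X
  | n + 2 => X * fibPoly (n + 1) - fibPoly n

lemma mz_neg (n : ℕ) (k : ℤ) (h : k < 0) : motzkinPoly n k = 0 := by
  cases n with
  | zero => simp [motzkinPoly]; omega
  | succ n => rw [motzkinPoly]; simp [h]

noncomputable def Mn (a k : ℕ) : Polynomial ℤ := motzkinPoly a (k : ℤ)

lemma Mn_succ (n k : ℕ) :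
    Mn (n+1) k = (if k = 0 then 0 else Mn n (k-1)) + X * Mn n k + Mn n (k+1) := by
  cases k with
  | zero =>
    simp only [Mn, Nat.cast_zero, if_pos rfl]
    rw [motzkinPoly]
    rw [if_neg (by omega)]
    rw [show (0:ℤ) - 1 = -1 by ring, mz_neg n (-1) (by omega)]
    push_cast; ring
  | succ k =>
    simp only [Mn, if_neg (Nat.succ_ne_zero k)]
    rw [motzkinPoly, if_neg (by push_cast; omega)]
    push_cast
    ring_nf

lemma Mn_gt : ∀ n k : ℕ, n < k → Mn n k = 0 := by
  intro n
  induction n with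
  | zero => intro k h; simp only [Mn, Nat.cast_ofNat]; rw [motzkinPoly]; simp; omega
  | succ n ih =>
    intro k h
    rw [Mn_succ]
    rw [if_neg (by omega)]
    rw [ih (k-1) (by omega), ih k (by omega), ih (k+1) (by omega)]
    ring

lemma Mn_diag : ∀ n : ℕ, Mn n n = 1 := by
  intro n
  induction n with
  | zero => simp [Mn, motzkinPoly]
  | succ n ih =>
    rw [Mn_succ, if_neg (Nat.succ_ne_zero n), Nat.succ_sub_one, ih,
      Mn_gt n (n+1) (by omega), Mn_gt n (n+2) (by omega)]
    ring

/-- coefficients of the monic orthogonal polynomials `p_k(x)`,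
`p_{k+1} = (x - t) p_k - p_{k-1}`:  `q k j` = coeff of `x^j` in `p_k`. -/
noncomputable def q : ℕ → ℕ → Polynomial ℤ
  | 0, j => if j = 0 then 1 else 0
  | 1, j => if j = 0 then -X else if j = 1 then 1 else 0
  | (k+2), 0 => - (X * q (k+1) 0) - q k 0
  | (k+2), (j+1) => q (k+1) j - X * q (k+1) (j+1) - q k (j+1)

lemma q_gt : ∀ k j : ℕ, k < j → q k j = 0 := by
  intro k
  induction k using Nat.strong_induction_on with
  | _ k ih =>
    match k with
    | 0 => intro j h; simp [q]; omega
    | 1 => intro j h; rw [q]; rw [if_neg (by omega), if_neg (by omega)]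
    | (k+2) =>
      intro j h
      match j, h with
      | (j+1), h =>
        rw [q, ih (k+1) (by omega) j (by omega), ih (k+1) (by omega) (j+1) (by omega),
          ih k (by omega) (j+1) (by omega)]
        ring

/-- the combined recurrence for `q` used in the orthogonality proof. -/
lemma qrec (k j : ℕ) :
    q (k+1) j + X * q k j + (if k = 0 then 0 else q (k-1) j) =
      (if j = 0 then 0 else q k (j-1)) := by
  match k with
  | 0 =>
    simp only [if_pos rfl, add_zero]
    match j with
    | 0 => simp [q]
    | 1 => simp [q]
    | (j+2) => simp [q]
  | (k+1) =>
    rw [if_neg (Nat.succ_ne_zero k), Nat.succ_sub_one]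
    match j with
    | 0 => rw [show k+1+1 = k+2 from rfl, q]; simp; ring
    | (j+1) => rw [show k+1+1 = k+2 from rfl, q]; simp; ring

lemma sum_ext (n N : ℕ) (h : n + 1 ≤ N) (f : ℕ → Polynomial ℤ) :
    ∑ k ∈ Finset.range N, Mn n k * f k = ∑ k ∈ Finset.range (n+1), Mn n k * f k := by
  rw [Finset.sum_subset (Finset.range_subset_range.2 h)]
  intro x _ hx
  rw [Mn_gt n x (by simp at hx; omega), zero_mul]

lemma shift (n N : ℕ) (h : n + 2 ≤ N) (g : ℕ → Polynomial ℤ) :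
    ∑ k ∈ Finset.range N, Mn (n+1) k * g k =
      ∑ k ∈ Finset.range N,
        Mn n k * (g (k+1) + X * g k + (if k = 0 then 0 else g (k-1))) := by
  obtain ⟨m, rfl⟩ : ∃ m, N = m + 1 := ⟨N - 1, by omega⟩
  have hA : ∑ k ∈ Finset.range (m+1), (if k = 0 then 0 else Mn n (k-1)) * g k =
      ∑ k ∈ Finset.range (m+1), Mn n k * g (k+1) := by
    rw [Finset.sum_range_succ' (fun k => (if k = 0 then 0 else Mn n (k-1)) * g k) m]
    rw [Finset.sum_range_succ (fun k => Mn n k * g (k+1)) m]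
    rw [Mn_gt n m (by omega)]
    simp
  have hC : ∑ k ∈ Finset.range (m+1), Mn n (k+1) * g k =
      ∑ k ∈ Finset.range (m+1), Mn n k * (if k = 0 then 0 else g (k-1)) := by
    rw [Finset.sum_range_succ' (fun k => Mn n k * (if k = 0 then 0 else g (k-1))) m]
    rw [Finset.sum_range_succ (fun k => Mn n (k+1) * g k) m]
    rw [Mn_gt n (m+1) (by omega)]
    simp
  calc ∑ k ∈ Finset.range (m+1), Mn (n+1) k * g k
      = ∑ k ∈ Finset.range (m+1),
          ((if k = 0 then 0 else Mn n (k-1)) * g k + X * (Mn n k * g k)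
            + Mn n (k+1) * g k) := by
        apply Finset.sum_congr rfl
        intro k _
        rw [Mn_succ]
        ring
    _ = ∑ k ∈ Finset.range (m+1), (if k = 0 then 0 else Mn n (k-1)) * g k
          + X * ∑ k ∈ Finset.range (m+1), Mn n k * g k
          + ∑ k ∈ Finset.range (m+1), Mn n (k+1) * g k := by
        rw [Finset.sum_add_distrib, Finset.sum_add_distrib, Finset.mul_sum]
    _ = _ := by
        rw [hA, hC, Finset.mul_sum, ← Finset.sum_add_distrib, ← Finset.sum_add_distrib]
        apply Finset.sum_congr rfl
        intro k _
        ring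

lemma orth : ∀ n j : ℕ, ∑ k ∈ Finset.range (n+1), Mn n k * q k j
    = if n = j then 1 else 0 := by
  intro n
  induction n with
  | zero =>
    intro j
    rw [Finset.sum_range_one, Mn_diag 0, one_mul, q]
    simp [eq_comm]
  | succ n ih =>
    intro j
    rw [shift n (n+2) le_rfl (fun k => q k j)]
    have : ∀ k, Mn n k * (q (k+1) j + X * q k j + (if k = 0 then 0 else q (k-1) j))
        = Mn n k * (if j = 0 then 0 else q k (j-1)) := by
      intro k; rw [qrec]
    rw [Finset.sum_congr rfl (fun k _ => this k)]
    cases j with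
    | zero => simp
    | succ j =>
      simp only [Nat.succ_ne_zero, if_neg, Nat.succ_sub_one, reduceIte]
      rw [sum_ext n (n+2) (by omega), ih j]
      simp [Nat.succ_inj]

lemma mom : ∀ a b N : ℕ, a + 1 ≤ N →
    ∑ k ∈ Finset.range N, Mn a k * Mn b k = Mn (a+b) 0 := by
  intro a
  induction a with
  | zero =>
    intro b N h
    obtain ⟨m, rfl⟩ : ∃ m, N = m + 1 := ⟨N - 1, by omega⟩
    rw [Finset.sum_range_succ' (fun k => Mn 0 k * Mn b k) m]
    have : ∀ k, Mn 0 (k+1) = 0 := fun k => Mn_gt 0 (k+1) (by omega)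
    simp [this, Mn_diag 0]
  | succ a ih =>
    intro b N h
    rw [shift a N (by omega) (fun k => Mn b k)]
    have : ∀ k, Mn b (k+1) + X * Mn b k + (if k = 0 then 0 else Mn b (k-1))
        = Mn (b+1) k := by
      intro k; rw [Mn_succ]; ring
    rw [Finset.sum_congr rfl (fun k _ => by rw [this k])]
    rw [ih (b+1) N (by omega)]
    congr 1
    omega


lemma q_zero : ∀ k : ℕ, q k 0 = (-1)^k * fibPoly k := by
  intro k
  induction k using Nat.strong_induction_on with
  | _ k ih =>
    match k with
    | 0 => simp [q, fibPoly]
    | 1 => simp [q, fibPoly]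
    | (k+2) =>
      rw [q, ih (k+1) (by omega), ih k (by omega), fibPoly]
      ring

lemma wronskian_sum (n : ℕ) :
    ∑ k ∈ Finset.range (n+1), (fibPoly k)^2 =
      fibPoly n * derivative (fibPoly (n+1)) - fibPoly (n+1) * derivative (fibPoly n) := by
  induction n with
  | zero => simp [fibPoly]
  | succ n ih =>
    rw [Finset.sum_range_succ, ih]
    rw [show n+1+1 = n+2 from rfl, fibPoly]
    rw [derivative_sub, derivative_mul, derivative_X]
    ring

lemma fib_sq_sum_ne_zero (n : ℕ) :
    ∑ k ∈ Finset.range (n+1), (fibPoly k)^2 ≠ 0 := by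
  intro h
  have h0 := congrArg (Polynomial.eval 0) h
  simp only [eval_finset_sum, eval_pow, eval_zero] at h0
  have h1 : (1:ℤ) ≤ ∑ k ∈ Finset.range (n+1), (Polynomial.eval 0 (fibPoly k))^2 := by
    have := Finset.single_le_sum (f := fun k => (Polynomial.eval 0 (fibPoly k))^2)
      (fun i _ => sq_nonneg _) (Finset.mem_range.2 (Nat.succ_pos n))
    simpa [fibPoly] using this
  omega

section MatrixPart

variable (n : ℕ)

noncomputable def Smat : Polynomial ℤ := ∑ k ∈ Finset.range (n+1), q k 0 * q k 0

noncomputable def Amat : Matrix (Fin (n+1)) (Fin (n+1)) (Polynomial ℤ) :=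
  Matrix.of fun i k => Mn i k

noncomputable def Cmat : Matrix (Fin (n+1)) (Fin (n+1)) (Polynomial ℤ) :=
  Matrix.of fun k j => q k j

noncomputable def Kmat : Matrix (Fin (n+1)) (Fin (n+1)) (Polynomial ℤ) :=
  Matrix.of fun i j => if (i:ℕ) = 0 then q j 0 else Mn i j

lemma A_mul_C : Amat n * Cmat n = 1 := by
  ext i j
  rw [Matrix.mul_apply]
  simp only [Amat, Cmat, Matrix.of_apply]
  rw [Fin.sum_univ_eq_sum_range (fun k => Mn i (k:ℕ) * q (k:ℕ) j)]
  rw [sum_ext i (n+1) i.isLt, orth i j]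
  rw [Matrix.one_apply]
  simp [Fin.ext_iff]

lemma det_A : (Amat n).det = 1 := by
  rw [Matrix.det_of_lowerTriangular (Amat n)
    (fun i j h => Mn_gt i j (by simpa using h))]
  simp [Amat, Mn_diag]

lemma det_C : (Cmat n).det = 1 := by
  have h := congrArg Matrix.det (A_mul_C n)
  rw [Matrix.det_mul, det_A, Matrix.det_one, one_mul] at h
  exact h

lemma det_K : (Kmat n).det = Smat n := by
  have hKC : Kmat n * Cmat n = Matrix.of fun i j : Fin (n+1) =>
      if (i:ℕ) = 0 then (∑ k ∈ Finset.range (n+1), q k 0 * q k (j:ℕ))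
      else (if i = j then 1 else 0) := by
    ext i j
    rw [Matrix.mul_apply]
    simp only [Kmat, Cmat, Matrix.of_apply]
    by_cases hi : (i:ℕ) = 0
    · simp only [hi, if_pos]
      rw [Fin.sum_univ_eq_sum_range (fun k => q (k:ℕ) 0 * q (k:ℕ) j)]
    · simp only [hi, if_neg, reduceIte]
      rw [Fin.sum_univ_eq_sum_range (fun k => Mn i (k:ℕ) * q (k:ℕ) j)]
      rw [sum_ext i (n+1) i.isLt, orth i j]
      simp [Fin.ext_iff]
  have htri : Matrix.BlockTriangular (Matrix.of fun i j : Fin (n+1) =>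
      if (i:ℕ) = 0 then (∑ k ∈ Finset.range (n+1), q k 0 * q k (j:ℕ))
      else (if i = j then 1 else 0)) id := by
    intro i j h
    simp only [id] at h
    have hi : (i:ℕ) ≠ 0 := by omega
    have hij : i ≠ j := Fin.ne_of_gt h
    simp [hi, hij]
    exact fun h0 => (hi (by simp [h0])).elim
  have hdet : (Kmat n * Cmat n).det = Smat n := by
    rw [hKC, Matrix.det_of_upperTriangular htri, Fin.prod_univ_succ]
    simp [Smat]
  rw [Matrix.det_mul, det_C, mul_one] at hdet
  exact hdet

end MatrixPart

lemma K_mul_KT (n : ℕ) : Kmat n * (Kmat n).transpose = Matrix.of fun i j : Fin (n+1) =>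
    if (i:ℕ) = 0 then (if (j:ℕ) = 0 then Smat n else 0)
    else (if (j:ℕ) = 0 then 0 else Mn ((i:ℕ)+(j:ℕ)) 0) := by
  ext i j
  rw [Matrix.mul_apply]
  simp only [Kmat, Matrix.transpose_apply, Matrix.of_apply]
  by_cases hi : (i:ℕ) = 0 <;> by_cases hj : (j:ℕ) = 0 <;>
    simp only [hi, hj, if_pos, if_neg, reduceIte]
  · rw [Fin.sum_univ_eq_sum_range (fun k => q (k:ℕ) 0 * q (k:ℕ) 0)]
    rfl
  · have : ∀ k : Fin (n+1), q (k:ℕ) 0 * Mn j k = Mn j k * q (k:ℕ) 0 :=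
      fun k => mul_comm _ _
    rw [Finset.sum_congr rfl (fun k _ => this k)]
    rw [Fin.sum_univ_eq_sum_range (fun k => Mn j (k:ℕ) * q (k:ℕ) 0)]
    rw [sum_ext j (n+1) j.isLt, orth j 0]
    simp [hj]
  · rw [Fin.sum_univ_eq_sum_range (fun k => Mn i (k:ℕ) * q (k:ℕ) 0)]
    rw [sum_ext i (n+1) i.isLt, orth i 0]
    simp [hi]
  · rw [Fin.sum_univ_eq_sum_range (fun k => Mn i (k:ℕ) * Mn j (k:ℕ))]
    rw [mom i j (n+1) i.isLt]

lemma Smat_eq (n : ℕ) : Smat n = ∑ k ∈ Finset.range (n+1), (fibPoly k)^2 := by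
  unfold Smat
  apply Finset.sum_congr rfl
  intro k _
  rw [q_zero k, mul_mul_mul_comm, ← pow_add, ← two_mul, pow_mul]
  norm_num
  ring

/-- For `n ≥ 1`, `d_2(n,t) = F_n(t)·F'_{n+1}(t) - F_{n+1}(t)·F'_n(t)`. -/
theorem hankel_det_motzkin_shift_two_wronskian (n : ℕ) (hn : 1 ≤ n) :
    Matrix.det (Matrix.of fun i j : Fin n => motzkinPoly (2 + (i : ℕ) + (j : ℕ)) 0) =
      fibPoly n * derivative (fibPoly (n + 1)) -
        fibPoly (n + 1) * derivative (fibPoly n) := by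
  obtain ⟨m, rfl⟩ : ∃ m, n = m + 1 := ⟨n - 1, by omega⟩
  set H : Matrix (Fin (m+1)) (Fin (m+1)) (Polynomial ℤ) :=
    Matrix.of fun i j : Fin (m+1) => motzkinPoly (2 + (i : ℕ) + (j : ℕ)) 0 with hH
  set S := Smat (m+1) with hS
  -- the submatrix of K*Kᵀ is H
  have hsub : ((Kmat (m+1) * (Kmat (m+1)).transpose).submatrix Fin.succ Fin.succ) = H := by
    refine Matrix.ext fun i j => ?_
    rw [K_mul_KT]
    simp only [Matrix.submatrix_apply, Matrix.of_apply, Fin.val_succ, hH]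
    rw [if_neg (by omega), if_neg (by omega)]
    show Mn ((i:ℕ)+1+((j:ℕ)+1)) 0 = motzkinPoly (2 + (i:ℕ) + (j:ℕ)) 0
    unfold Mn
    norm_num
    congr 1
    omega
  have hdet1 : (Kmat (m+1) * (Kmat (m+1)).transpose).det = S * H.det := by
    rw [Matrix.det_succ_row_zero]
    rw [Fin.sum_univ_succ]
    have h0 : ∀ j : Fin (m+1),
        (Kmat (m+1) * (Kmat (m+1)).transpose) 0 j.succ = 0 := by
      intro j
      rw [K_mul_KT]
      simp
    simp only [h0, mul_zero, zero_mul, Finset.sum_const_zero, add_zero]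
    rw [Fin.succAbove_zero, hsub]
    rw [K_mul_KT]
    simp
    exact Or.inl hS.symm
  have hdet2 : (Kmat (m+1) * (Kmat (m+1)).transpose).det = S * S := by
    rw [Matrix.det_mul, Matrix.det_transpose, det_K]
  have hSne : S ≠ 0 := by
    rw [hS, Smat_eq]
    exact fib_sq_sum_ne_zero (m+1)
  have : S * H.det = S * S := by rw [← hdet1, hdet2]
  have hfin : H.det = S := mul_left_cancel₀ hSne this
  rw [hfin, hS, Smat_eq]
  exact wronskian_sum (m+1)
end

section
/- Let t be a real number with t^2 > 4, and set \alpha = (t + \sqrt{t^2-4})/2 and \beta = (t - \sqrt{t^2-4})/2. Then for all nonnegative integers k and n, F_n^{(k)}(t) = \frac{\alpha^{(k+1)(n+1)} - \beta^{(k+1)(n+1)}}{\alpha^{k+1} - \beta^{k+1}}. -/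
/-- The Lucas polynomials evaluated at a real `t`: `L_0 = 2`, `L_1 = t`,
`L_n = t·L_{n-1} - L_{n-2}`. -/
def lucasReal : ℕ → ℝ → ℝ
  | 0, _ => 2
  | 1, t => t
  | n + 2, t => t * lucasReal (n + 1) t - lucasReal n t

/-- The generalized Fibonacci polynomials evaluated at a real `t`:
`F_0^{(k)} = 1`, `F_{-1}^{(k)} = 0` (so `F_1^{(k)} = L_{k+1}`),
`F_n^{(k)} = L_{k+1}·F_{n-1}^{(k)} - F_{n-2}^{(k)}`. -/
def genFibReal (k : ℕ) : ℕ → ℝ → ℝ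
  | 0, _ => 1
  | 1, t => lucasReal (k + 1) t
  | n + 2, t => lucasReal (k + 1) t * genFibReal k (n + 1) t - genFibReal k n t

/-! If `α β = 1` and `α + β = t`, then `L_m(t) = α^m + β^m`, so `x = α^(k+1)` and `y = β^(k+1)`
again satisfy `x y = 1` and `x + y = L_{k+1}(t)`. The recurrence of `F^{(k)}` is then that of
`(x^(n+1) - y^(n+1)) / (x - y)`. For `t² > 4` the roots `α, β` of `X² - tX + 1` are real, distinct
and have nonzero sum `t`, so `x ≠ y`. -/

theorem lucasReal_eq_pow_add_pow {t a b : ℝ} (hab : a * b = 1) (hsum : a + b = t) :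
    ∀ m, lucasReal m t = a ^ m + b ^ m
  | 0 => by norm_num [lucasReal]
  | 1 => by simp [lucasReal, ← hsum]
  | m + 2 => by
    rw [lucasReal, lucasReal_eq_pow_add_pow hab hsum (m + 1),
      lucasReal_eq_pow_add_pow hab hsum m, ← hsum]
    linear_combination (a ^ m + b ^ m) * hab

theorem genFibReal_mul_sub {k : ℕ} {t x y : ℝ} (hxy : x * y = 1)
    (hsum : x + y = lucasReal (k + 1) t) :
    ∀ n, genFibReal k n t * (x - y) = x ^ (n + 1) - y ^ (n + 1)
  | 0 => by simp [genFibReal]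
  | 1 => by
    rw [genFibReal, ← hsum]
    ring
  | n + 2 => by
    rw [genFibReal, sub_mul, mul_assoc, genFibReal_mul_sub hxy hsum (n + 1),
      genFibReal_mul_sub hxy hsum n, ← hsum]
    linear_combination (x ^ (n + 1) - y ^ (n + 1)) * hxy

theorem pow_ne_pow_of_ne_of_add_ne_zero {R : Type*} [Ring R] [LinearOrder R]
    [IsStrictOrderedRing R] {a b : R} (hne : a ≠ b) (hsum : a + b ≠ 0) {m : ℕ}
    (hm : m ≠ 0) : a ^ m ≠ b ^ m := by
  rw [Ne, pow_eq_pow_iff_of_ne_zero hm]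
  rintro (h | ⟨h, -⟩)
  · exact hne h
  · exact hsum (by rw [h, neg_add_cancel])

/-- Binet-type formula: for `t² > 4`, with `α = (t+√(t²-4))/2` and `β = (t-√(t²-4))/2`,
`F_n^{(k)}(t) = (α^{(k+1)(n+1)} - β^{(k+1)(n+1)}) / (α^{k+1} - β^{k+1})`. -/
theorem genFibReal_binet (t : ℝ) (ht : t ^ 2 > 4) (k n : ℕ) :
    genFibReal k n t =
      (((t + Real.sqrt (t ^ 2 - 4)) / 2) ^ ((k + 1) * (n + 1)) -
          ((t - Real.sqrt (t ^ 2 - 4)) / 2) ^ ((k + 1) * (n + 1))) /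
        (((t + Real.sqrt (t ^ 2 - 4)) / 2) ^ (k + 1) -
          ((t - Real.sqrt (t ^ 2 - 4)) / 2) ^ (k + 1)) := by
  set s := Real.sqrt (t ^ 2 - 4)
  set α := (t + s) / 2
  set β := (t - s) / 2
  have hs_sq : s ^ 2 = t ^ 2 - 4 := Real.sq_sqrt (by linarith)
  have hs_pos : 0 < s := Real.sqrt_pos.mpr (by linarith)
  have hαβ : α * β = 1 := by linear_combination (-1 / 4 : ℝ) * hs_sq
  have hsum : α + β = t := by ring
  have ht0 : t ≠ 0 := by rintro rfl; norm_num at ht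
  have hne : α ^ (k + 1) - β ^ (k + 1) ≠ 0 :=
    sub_ne_zero.mpr <| pow_ne_pow_of_ne_of_add_ne_zero (by simp only [α, β]; linarith)
      (hsum ▸ ht0) k.succ_ne_zero
  rw [eq_div_iff hne, pow_mul, pow_mul]
  refine genFibReal_mul_sub (by rw [← mul_pow, hαβ, one_pow]) ?_ n
  exact (lucasReal_eq_pow_add_pow hαβ hsum (k + 1)).symm
end

section
/- For all nonnegative integers m and n with n \geq 1 (or with the empty product convention for all n), the Hankel determinant of shifted Catalan numbers satisfies \det( C_{m+i+j} )_{i,j=0}^{n-1} = \prod_{1 \leq i \leq j \leq m-1} \frac{2n+i+j}{i+j}, where C_n = \binom{2n}{n}/(n+1) is the n-th Catalan number. -/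
/-!
Write `D(m, n)` for the determinant and `P(m, n)` (`catalanHankelProd m n`) for the product.
By the Desnanot–Jacobi identity applied to the Hankel matrix,
`D(m, n + 2) D(m + 2, n) = D(m, n + 1) D(m + 2, n + 1) - D(m + 1, n + 1)²`. The product satisfies the same recurrence: the ratios
`P(m, n + 2) P(m + 2, n) / P(m + 1, n + 1)²` and `P(m, n + 1) P(m + 2, n + 1) / P(m + 1, n + 1)²`
are explicit rational functions, and the recurrence reduces to
`(n + 1)(2n + 3) + (2m + 1)(2n + m + 3) = (2n + 2m + 3)(n + m + 2)`. Since `P > 0`, the recurrence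
determines `D(·, n + 2)` from `D(·, n)` and `D(·, n + 1)`, and the two sides agree for `n = 0` and
for `n = 1`, where `P(m + 1, 1) / P(m, 1) = 2(2m + 1)/(m + 2) = C_{m+1} / C_m`.
-/

open Finset Nat

namespace Matrix

variable {R : Type*}

section DesnanotJacobi

variable [CommRing R]

/- Matrix determinant lemma: the matrix is `1 + U * W` with `U` of width two, and `1 + W * U` is
the `2 × 2` matrix `!![u a, v a; u b, v b]`. -/
theorem det_one_updateCol_updateCol {ι : Type*} [Fintype ι] [DecidableEq ι] {a b : ι}
    (hab : a ≠ b) (u v : ι → R) :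
    (((1 : Matrix ι ι R).updateCol a u).updateCol b v).det = u a * v b - u b * v a := by
  set U : Matrix ι (Fin 2) R :=
    of fun i => ![u i - (Pi.single a 1 : ι → R) i, v i - (Pi.single b 1 : ι → R) i]
  set W : Matrix (Fin 2) ι R := of ![(Pi.single a 1 : ι → R), Pi.single b 1]
  have hUW : ((1 : Matrix ι ι R).updateCol a u).updateCol b v = 1 + U * W := by
    ext i k
    rcases eq_or_ne k b with rfl | hkb
    · simp [U, W, mul_apply, Fin.sum_univ_two, one_apply, Pi.single_apply, hab.symm]
    rcases eq_or_ne k a with rfl | hka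
    · simp [U, W, mul_apply, Fin.sum_univ_two, one_apply, Pi.single_apply, hab]
    simp [U, W, mul_apply, Fin.sum_univ_two, one_apply, Pi.single_apply, hka, hkb]
  have hWU : 1 + W * U = !![u a, v a; u b, v b] := by
    ext r s
    fin_cases r <;> fin_cases s <;> simp [U, W, Pi.single_apply, hab, hab.symm]
  rw [hUW, det_one_add_mul_comm, hWU, det_fin_two_of]
  ring

theorem det_updateCol_single {n : ℕ} (A : Matrix (Fin (n + 1)) (Fin (n + 1)) R)
    (i j : Fin (n + 1)) :
    (A.updateCol j (Pi.single i 1)).det =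
      (-1) ^ (i + j : ℕ) * (A.submatrix i.succAbove j.succAbove).det := by
  rw [← det_transpose, ← updateRow_transpose, ← adjugate_apply, adjugate_fin_succ_eq_det_submatrix,
    ← det_transpose, transpose_submatrix, transpose_transpose, add_comm]

theorem det_updateCol_zero_updateCol_last_single {n : ℕ}
    (A : Matrix (Fin (n + 2)) (Fin (n + 2)) R) :
    ((A.updateCol 0 (Pi.single 0 1)).updateCol (Fin.last _) (Pi.single (Fin.last _) 1)).det =
      (A.submatrix (Fin.succ ∘ Fin.castSucc) (Fin.succ ∘ Fin.castSucc)).det := by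
  have h : ((A.updateCol 0 (Pi.single 0 1)).submatrix Fin.castSucc Fin.castSucc) =
      (A.submatrix Fin.castSucc Fin.castSucc).updateCol 0 (Pi.single 0 1) := by
    ext i j
    simp [updateCol_apply, Pi.single_apply]
  rw [det_updateCol_single, Fin.succAbove_last, h, det_updateCol_single]
  simp [Fin.succAbove_zero, submatrix_submatrix, Function.comp_def]

theorem det_mul_desnanot_jacobi {n : ℕ} (A : Matrix (Fin (n + 2)) (Fin (n + 2)) R) :
    A.det * ((A.submatrix Fin.succ Fin.succ).det * (A.submatrix Fin.castSucc Fin.castSucc).det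
      - (A.submatrix Fin.castSucc Fin.succ).det * (A.submatrix Fin.succ Fin.castSucc).det) =
    A.det * (A.det * (A.submatrix (Fin.succ ∘ Fin.castSucc) (Fin.succ ∘ Fin.castSucc)).det) := by
  -- The first and last columns of `C` are those of `adjugate A`, so `A * C` has columns
  -- `det A • e₀` and `det A • e_last` there and agrees with `A` elsewhere.
  set l := Fin.last (n + 1)
  set C := ((1 : Matrix _ _ R).updateCol 0 (A.cramer (Pi.single 0 1))).updateCol l
    (A.cramer (Pi.single l 1))
  have hC : C.det =
      (A.submatrix Fin.succ Fin.succ).det * (A.submatrix Fin.castSucc Fin.castSucc).det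
      - (A.submatrix Fin.castSucc Fin.succ).det * (A.submatrix Fin.succ Fin.castSucc).det := by
    rw [det_one_updateCol_updateCol (Fin.last_pos.ne : (0 : Fin (n + 2)) ≠ l)]
    have hsign : ((-1 : R) ^ (n + 1)) ^ 2 = 1 := by
      rw [← pow_mul, Even.neg_one_pow ⟨n + 1, by ring⟩]
    simp only [cramer_apply, det_updateCol_single, l, Fin.succAbove_zero, Fin.succAbove_last,
      Fin.val_zero, Fin.val_last, zero_add, add_zero, pow_zero, one_mul, Even.add_self,
      Even.neg_pow, one_pow]
    linear_combination -((A.submatrix Fin.castSucc Fin.succ).det *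
      (A.submatrix Fin.succ Fin.castSucc).det) * hsign
  have hAC :
      A * C = (A.updateCol 0 (A.det • Pi.single 0 1)).updateCol l (A.det • Pi.single l 1) := by
    rw [mul_updateCol, mul_updateCol, mul_one, mulVec_cramer, mulVec_cramer]
  rw [← hC, ← det_mul, hAC, det_updateCol_smul, updateCol_comm _ Fin.last_pos.ne,
    det_updateCol_smul, updateCol_comm _ Fin.last_pos.ne', det_updateCol_zero_updateCol_last_single]

open Polynomial in
theorem desnanot_jacobi {n : ℕ} (A : Matrix (Fin (n + 2)) (Fin (n + 2)) R) :
    (A.submatrix Fin.succ Fin.succ).det * (A.submatrix Fin.castSucc Fin.castSucc).det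
      - (A.submatrix Fin.castSucc Fin.succ).det * (A.submatrix Fin.succ Fin.castSucc).det =
    A.det * (A.submatrix (Fin.succ ∘ Fin.castSucc) (Fin.succ ∘ Fin.castSucc)).det := by
  -- `det A` need not be regular, but `det (X • 1 + A)` is monic, and `A` is its value at `0`.
  set B : Matrix (Fin (n + 2)) (Fin (n + 2)) R[X] := (X : R[X]) • 1 + A.map C
  have hB : B.map (evalRingHom 0) = A := by
    ext i j
    simp [B, one_apply, apply_ite]
  have hBreg : IsLeftRegular B.det :=
    (Monic.isRegular (leadingCoeff_det_X_one_add_C A)).left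
  have h := congrArg (evalRingHom 0) (hBreg (det_mul_desnanot_jacobi B))
  simpa only [map_sub, map_mul, RingHom.map_det, RingHom.mapMatrix_apply, ← submatrix_map,
    hB] using h

end DesnanotJacobi

def hankel (a : ℕ → R) (m n : ℕ) : Matrix (Fin n) (Fin n) R :=
  of fun i j => a (m + i + j)

theorem hankel_submatrix (a : ℕ → R) (m : ℕ) {k l : ℕ} (f g : Fin k → Fin l) (p q : ℕ)
    (hf : ∀ i, (f i : ℕ) = i + p) (hg : ∀ j, (g j : ℕ) = j + q) :
    (hankel a m l).submatrix f g = hankel a (m + (p + q)) k := by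
  ext i j
  simp only [hankel, submatrix_apply, of_apply, hf, hg]
  congr 1
  ring

theorem det_hankel_condensation [CommRing R] (a : ℕ → R) (m n : ℕ) :
    (hankel a m (n + 2)).det * (hankel a (m + 2) n).det =
      (hankel a m (n + 1)).det * (hankel a (m + 2) (n + 1)).det -
        (hankel a (m + 1) (n + 1)).det ^ 2 := by
  have h := desnanot_jacobi (hankel a m (n + 2))
  rw [hankel_submatrix a m Fin.succ Fin.succ 1 1 (fun _ => rfl) (fun _ => rfl),
    hankel_submatrix a m Fin.castSucc Fin.castSucc 0 0 (fun _ => rfl) (fun _ => rfl),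
    hankel_submatrix a m Fin.castSucc Fin.succ 0 1 (fun _ => rfl) (fun _ => rfl),
    hankel_submatrix a m Fin.succ Fin.castSucc 1 0 (fun _ => rfl) (fun _ => rfl),
    hankel_submatrix a m (Fin.succ ∘ Fin.castSucc) (Fin.succ ∘ Fin.castSucc) 1 1 (fun _ => rfl)
      (fun _ => rfl)] at h
  simp only [Nat.reduceAdd, add_zero] at h
  linear_combination -h

end Matrix

open Matrix

def catalanHankelFactor (j n : ℕ) : ℚ := ∏ i ∈ Icc 1 j, ((2 * n + i + j : ℚ) / (i + j : ℚ))

def catalanHankelProd (m n : ℕ) : ℚ := ∏ j ∈ Icc 1 (m - 1), catalanHankelFactor j n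

theorem prod_Icc_add_eq_factorial_div (c j : ℕ) :
    ∏ i ∈ Icc 1 j, ((i : ℚ) + c) = (c + j)! / c ! := by
  induction j with
  | zero => simp [div_self (by positivity : (c ! : ℚ) ≠ 0)]
  | succ j ih =>
    rw [prod_Icc_succ_top (by omega), ih, ← add_assoc, factorial_succ]
    push_cast
    ring

theorem catalanHankelFactor_eq (j n : ℕ) :
    catalanHankelFactor j n = (2 * n + 2 * j)! * j ! / ((2 * n + j)! * (2 * j)!) := by
  have hnum : ∏ i ∈ Icc 1 j, (2 * n + i + j : ℚ) = (2 * n + 2 * j)! / (2 * n + j)! := by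
    rw [show 2 * n + 2 * j = (2 * n + j) + j by ring, ← prod_Icc_add_eq_factorial_div]
    exact prod_congr rfl fun i _ => by push_cast; ring
  have hden : ∏ i ∈ Icc 1 j, (i + j : ℚ) = (2 * j)! / j ! := by
    rw [two_mul, ← prod_Icc_add_eq_factorial_div]
  rw [catalanHankelFactor, prod_div_distrib, hnum, hden]
  field_simp

theorem catalanHankelFactor_pos (j n : ℕ) : 0 < catalanHankelFactor j n := by
  rw [catalanHankelFactor_eq]
  positivity

theorem catalanHankelFactor_succ_left (j n : ℕ) :
    catalanHankelFactor (j + 1) n * ((2 * n + j + 1) * (2 * j + 1)) =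
      catalanHankelFactor j n * ((2 * n + 2 * j + 1) * (n + j + 1)) := by
  rw [catalanHankelFactor_eq, catalanHankelFactor_eq,
    show 2 * n + 2 * (j + 1) = 2 * n + 2 * j + 1 + 1 by ring,
    show 2 * n + (j + 1) = 2 * n + j + 1 by ring, show 2 * (j + 1) = 2 * j + 1 + 1 by ring]
  simp only [factorial_succ]
  push_cast
  field_simp
  ring

theorem catalanHankelFactor_mul_antidiagonal (m n : ℕ) :
    catalanHankelFactor m (n + 2) * catalanHankelFactor (m + 2) n *
        ((2 * m + 3) * (2 * n + m + 4)) =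
      catalanHankelFactor (m + 1) (n + 1) ^ 2 * ((2 * m + 1) * (2 * n + m + 3)) := by
  simp only [catalanHankelFactor_eq]
  rw [show 2 * (n + 2) + 2 * m = 2 * n + 2 * m + 4 by ring,
    show 2 * n + 2 * (m + 2) = 2 * n + 2 * m + 4 by ring,
    show 2 * (n + 1) + 2 * (m + 1) = 2 * n + 2 * m + 4 by ring,
    show 2 * (n + 2) + m = 2 * n + m + 4 by ring, show 2 * n + (m + 2) = 2 * n + m + 2 by ring,
    show 2 * (n + 1) + (m + 1) = 2 * n + m + 3 by ring, show 2 * (m + 2) = 2 * m + 4 by ring,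
    show 2 * (m + 1) = 2 * m + 2 by ring]
  simp only [factorial_succ]
  push_cast
  field_simp
  ring

theorem catalanHankelProd_succ (m n : ℕ) :
    catalanHankelProd (m + 1) n = catalanHankelProd m n * catalanHankelFactor m n := by
  cases m with
  | zero => simp [catalanHankelProd, catalanHankelFactor]
  | succ m => exact prod_Icc_succ_top (by omega) _

theorem catalanHankelProd_pos (m n : ℕ) : 0 < catalanHankelProd m n :=
  prod_pos fun j _ => catalanHankelFactor_pos j n

theorem catalanHankelProd_zero_right (m : ℕ) : catalanHankelProd m 0 = 1 := by
  refine prod_eq_one fun j _ => prod_eq_one fun i hi => ?_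
  have : (1 : ℚ) ≤ i := by exact_mod_cast (mem_Icc.mp hi).1
  rw [cast_zero, mul_zero, zero_add, div_self (by positivity)]

theorem catalanHankelProd_mul_antidiagonal (m n : ℕ) :
    catalanHankelProd m (n + 2) * catalanHankelProd (m + 2) n * ((2 * m + 1) * (2 * n + m + 3)) =
      catalanHankelProd (m + 1) (n + 1) ^ 2 * ((n + 1) * (2 * n + 3)) := by
  induction m with
  | zero =>
    simp only [catalanHankelProd, catalanHankelFactor, zero_tsub, add_tsub_cancel_right, Icc_self,
      prod_singleton, Icc_eq_empty_of_lt zero_lt_one, prod_empty]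
    ring
  | succ m ih =>
    simp only [catalanHankelProd_succ (m + 2), catalanHankelProd_succ (m + 1) (n + 1),
      catalanHankelProd_succ m (n + 2)]
    push_cast
    linear_combination (catalanHankelProd m (n + 2) * catalanHankelProd (m + 2) n) *
      catalanHankelFactor_mul_antidiagonal m n + catalanHankelFactor (m + 1) (n + 1) ^ 2 * ih

theorem catalanHankelProd_mul_add_two_left (m n : ℕ) :
    catalanHankelProd m n * catalanHankelProd (m + 2) n * ((2 * n + m + 1) * (2 * m + 1)) =
      catalanHankelProd (m + 1) n ^ 2 * ((2 * n + 2 * m + 1) * (n + m + 1)) := by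
  rw [catalanHankelProd_succ (m + 1), catalanHankelProd_succ m]
  linear_combination catalanHankelProd m n ^ 2 * catalanHankelFactor m n *
    catalanHankelFactor_succ_left m n

theorem catalanHankelProd_condensation (m n : ℕ) :
    catalanHankelProd m (n + 2) * catalanHankelProd (m + 2) n =
      catalanHankelProd m (n + 1) * catalanHankelProd (m + 2) (n + 1) -
        catalanHankelProd (m + 1) (n + 1) ^ 2 := by
  have hA := catalanHankelProd_mul_antidiagonal m n
  have hB := catalanHankelProd_mul_add_two_left m (n + 1)
  push_cast at hB
  apply mul_right_cancel₀ (by positivity : ((2 * m + 1) * (2 * n + m + 3) : ℚ) ≠ 0)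
  linear_combination hA - hB

theorem succ_succ_mul_catalan_succ (n : ℕ) :
    (n + 2) * catalan (n + 1) = 2 * (2 * n + 1) * catalan n := by
  apply Nat.eq_of_mul_eq_mul_left n.succ_pos
  calc (n + 1) * ((n + 2) * catalan (n + 1))
      = (n + 1) * centralBinom (n + 1) := by rw [← succ_mul_catalan_eq_centralBinom]
    _ = 2 * (2 * n + 1) * centralBinom n := succ_mul_centralBinom_succ n
    _ = (n + 1) * (2 * (2 * n + 1) * catalan n) := by
      rw [← succ_mul_catalan_eq_centralBinom]; ring

theorem catalanHankelFactor_one_right (j : ℕ) :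
    catalanHankelFactor j 1 * (j + 2) = 2 * (2 * j + 1) := by
  rw [catalanHankelFactor_eq, show 2 * 1 + 2 * j = 2 * j + 1 + 1 by ring,
    show 2 * 1 + j = j + 1 + 1 by ring]
  simp only [factorial_succ]
  push_cast
  field_simp
  ring

theorem catalan_eq_catalanHankelProd (m : ℕ) : (catalan m : ℚ) = catalanHankelProd m 1 := by
  induction m with
  | zero => simp [catalanHankelProd]
  | succ m ih =>
    have hrec : ((m + 2) * catalan (m + 1) : ℚ) = 2 * (2 * m + 1) * catalan m := by
      exact_mod_cast succ_succ_mul_catalan_succ m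
    apply mul_left_cancel₀ (by positivity : (m + 2 : ℚ) ≠ 0)
    rw [catalanHankelProd_succ, hrec, ih]
    linear_combination -catalanHankelProd m 1 * catalanHankelFactor_one_right m

theorem det_hankel_catalan (m n : ℕ) :
    (hankel (fun k => (catalan k : ℚ)) m n).det = catalanHankelProd m n := by
  induction n using Nat.twoStepInduction generalizing m with
  | zero => rw [det_fin_zero, catalanHankelProd_zero_right]
  | one => exact (det_fin_one _).trans (catalan_eq_catalanHankelProd m)
  | more n ih₀ ih₁ =>
    have h := det_hankel_condensation (fun k => (catalan k : ℚ)) m n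
    rw [ih₀, ih₁, ih₁, ih₁, ← catalanHankelProd_condensation] at h
    exact mul_right_cancel₀ (catalanHankelProd_pos (m + 2) n).ne' h

/-- Hankel determinants of shifted Catalan numbers:
`det(C_{m+i+j})_{i,j=0}^{n-1} = ∏_{1 ≤ i ≤ j ≤ m-1} (2n+i+j)/(i+j)`. -/
theorem hankel_det_shifted_catalan (m n : ℕ) :
    Matrix.det (Matrix.of fun i j : Fin n => (catalan (m + (i : ℕ) + (j : ℕ)) : ℚ)) =
      ∏ j ∈ Finset.Icc 1 (m - 1), ∏ i ∈ Finset.Icc 1 j,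
        ((2 * n + i + j : ℚ) / (i + j : ℚ)) :=
  det_hankel_catalan m n
end
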